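/- Let Ω ⊆ ℝⁿ be open, v : Ω → [0, ∞) integrable, φ a gauge function, and E ⊆ Ω a set of n-dimensional Lebesgue measure zero such that for every x ∈ E, limsup_{r→0⁺} (φ(2r))^{−1} ∫_{B(x,r)} v dy > 1. Then H^φ(E) = 0. -/

import Mathlib

open MeasureTheory Metric Filter

/-- A gauge function: nondecreasing, right-continuous, positive for positive arguments. -/
def IsGauge (φ : ℝ → ℝ) : Prop :=
  Monotone φ ∧ (∀ t : ℝ, 0 < t → 0 < φ t) ∧
    ∀ t : ℝ, 0 ≤ t → ContinuousWithinAt φ (Set.Ici t) t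

/-- The Hausdorff measure associated with the gauge `φ`. -/
noncomputable def hausdorffGauge {X : Type*} [EMetricSpace X] [MeasurableSpace X]
    [BorelSpace X] (φ : ℝ → ℝ) : Measure X :=
  Measure.mkMetric (fun d => ENNReal.ofReal (φ d.toReal))

/-!
With μ the finite measure `v dy` on Ω, the hypothesis gives, at every x ∈ E, arbitrarily small
radii r with φ(2r) < μ(B(x, r)). Since μ(E) = 0, Besicovitch's covering theorem covers E by
closed balls B̄(x_i, r_i) of radii below any δ with ∑ μ(B̄(x_i, r_i)) ≤ ε. As diam B̄(x, r) ≤ 2r and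
φ is monotone, these covers have ∑ φ(diam) ≤ ∑ φ(2 r_i) ≤ ε, so H^φ(E) ≤ ε.
-/

open scoped ENNReal Topology

theorem ediam_closedBall_le_ofReal {X : Type*} [PseudoMetricSpace X] (x : X) (r : ℝ) :
    ediam (closedBall x r) ≤ ENNReal.ofReal (2 * r) :=
  ediam_le_of_forall_dist_le fun y hy z hz => by
    linarith [dist_triangle_right y z x, mem_closedBall.1 hy, mem_closedBall.1 hz]

section HausdorffGauge

variable {X : Type*} [MetricSpace X] [MeasurableSpace X] [BorelSpace X]

theorem hausdorffGauge_le_of_forall_closedBall_cover {φ : ℝ → ℝ} (hφ : Monotone φ)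
    {E : Set X} {c : ℝ≥0∞}
    (hcover : ∀ δ > 0, ∃ (t : Set X) (r : X → ℝ), t.Countable ∧ (∀ x ∈ t, r x ∈ Set.Ioo 0 δ) ∧
      E ⊆ ⋃ x ∈ t, closedBall x (r x) ∧ ∑' x : t, ENNReal.ofReal (φ (2 * r x)) ≤ c) :
    hausdorffGauge φ E ≤ c := by
  choose t r ht hrδ hEt hsum using fun k : ℕ => hcover (1 / ((k : ℝ) + 1)) (by positivity)
  have : ∀ k, Countable (t k) := fun k => (ht k).to_subtype
  have hδ : Tendsto (fun k : ℕ => ENNReal.ofReal (2 * (1 / ((k : ℝ) + 1)))) atTop (𝓝 0) := by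
    simpa using (ENNReal.tendsto_ofReal (tendsto_one_div_add_atTop_nhds_zero_nat.const_mul 2))
  calc hausdorffGauge φ E
      ≤ liminf (fun k => ∑' i : t k,
          ENNReal.ofReal (φ (ediam (closedBall (i : X) (r k i))).toReal)) atTop := by
        refine Measure.mkMetric_le_liminf_tsum E _ hδ (fun k (i : t k) => closedBall (i : X) (r k i))
          (Eventually.of_forall fun k i => (ediam_closedBall_le_ofReal _ _).trans
            (ENNReal.ofReal_le_ofReal (by linarith [(hrδ k i i.2).2])))
          (Eventually.of_forall fun k => by simpa [Set.iUnion_coe_set] using hEt k) _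
    _ ≤ c := by
        refine liminf_le_of_frequently_le (Frequently.of_forall fun k => ?_)
        refine (ENNReal.tsum_le_tsum fun i => ?_).trans (hsum k)
        have hr := (hrδ k i i.2).1
        exact ENNReal.ofReal_le_ofReal (hφ (ENNReal.toReal_le_of_le_ofReal (by linarith)
          (ediam_closedBall_le_ofReal _ _)))

variable [SecondCountableTopology X] [HasBesicovitchCovering X]

theorem exists_closedBall_cover_tsum_le_of_frequently_le_measure (μ : Measure X) [SFinite μ]
    [μ.OuterRegular] {g : ℝ → ℝ≥0∞} {E : Set X} (hE : μ E = 0)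
    (hg : ∀ x ∈ E, ∃ᶠ r in 𝓝[>] 0, g r ≤ μ (closedBall x r)) {ε : ℝ≥0∞} (hε : ε ≠ 0)
    {δ : ℝ} (hδ : 0 < δ) :
    ∃ (t : Set X) (r : X → ℝ), t.Countable ∧ (∀ x ∈ t, r x ∈ Set.Ioo 0 δ) ∧
      E ⊆ ⋃ x ∈ t, closedBall x (r x) ∧ ∑' x : t, g (r x) ≤ ε := by
  let f : X → Set ℝ := fun x => {r | r ∈ Set.Ioo 0 δ ∧ g r ≤ μ (closedBall x r)}
  have hf : ∀ x ∈ E, ∀ δ' > 0, (f x ∩ Set.Ioo 0 δ').Nonempty := fun x hx δ' hδ' =>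
    ((hg x hx).and_eventually (Ioo_mem_nhdsGT (lt_min hδ hδ'))).exists.imp
      fun r ⟨hr, hr0, hrδ⟩ => ⟨⟨⟨hr0, hrδ.trans_le (min_le_left _ _)⟩, hr⟩,
        hr0, hrδ.trans_le (min_le_right _ _)⟩
  obtain ⟨t, r, ht, -, hrf, hEt, hsum⟩ :=
    Besicovitch.exists_closedBall_covering_tsum_measure_le μ hε f E hf
  refine ⟨t, r, ht, fun x hx => (hrf x hx).1, hEt, ?_⟩
  calc ∑' x : t, g (r x)
      ≤ ∑' x : t, μ (closedBall (x : X) (r x)) := ENNReal.tsum_le_tsum fun x => (hrf x x.2).2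
    _ ≤ ε := by simpa [hE] using hsum

theorem hausdorffGauge_eq_zero_of_frequently_le_measure (μ : Measure X) [SFinite μ]
    [μ.OuterRegular] {φ : ℝ → ℝ} (hφ : Monotone φ) {E : Set X} (hE : μ E = 0)
    (hφE : ∀ x ∈ E, ∃ᶠ r in 𝓝[>] 0, ENNReal.ofReal (φ (2 * r)) ≤ μ (closedBall x r)) :
    hausdorffGauge φ E = 0 :=
  nonpos_iff_eq_zero.1 <| le_of_forall_gt_imp_ge_of_dense fun _ hε =>
    hausdorffGauge_le_of_forall_closedBall_cover hφ fun _ hδ =>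
      exists_closedBall_cover_tsum_le_of_frequently_le_measure μ hE hφE hε.ne' hδ

end HausdorffGauge

theorem frequently_lt_of_one_lt_limsup_div {α : Type*} {l : Filter α} [l.NeBot] {f g : α → ℝ}
    (hf : ∀ᶠ a in l, 0 ≤ f a) (hg : ∀ᶠ a in l, 0 < g a)
    (h : 1 < limsup (fun a => f a / g a) l) : ∃ᶠ a in l, g a < f a := by
  have hbdd : IsCoboundedUnder (· ≤ ·) l fun a => f a / g a :=
    isCoboundedUnder_le_of_eventually_le l ((hf.and hg).mono fun a ha => div_nonneg ha.1 ha.2.le)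
  exact (frequently_lt_of_lt_limsup hbdd h).mp <|
    hg.mono fun a hga hlt => by rwa [one_lt_div hga] at hlt

theorem ofReal_setIntegral_le_withDensity {α : Type*} [MeasurableSpace α] {μ : Measure α}
    {v : α → ℝ} {Ω s : Set α} (hv : ∀ x, 0 ≤ v x) (hvΩ : IntegrableOn v Ω μ) (hs : s ⊆ Ω) :
    ENNReal.ofReal (∫ y in s, v y ∂μ) ≤
      (μ.restrict Ω).withDensity (fun y => ENNReal.ofReal (v y)) s := by
  rw [ofReal_integral_eq_lintegral_ofReal (hvΩ.mono_set hs) (Eventually.of_forall hv),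
    ← Measure.restrict_restrict_of_subset hs]
  exact withDensity_apply_le _ s

theorem stmt_5_general (n : ℕ)
    (Ω : Set (EuclideanSpace ℝ (Fin n))) (hΩ : IsOpen Ω)
    (v : EuclideanSpace ℝ (Fin n) → ℝ) (hv : ∀ x, 0 ≤ v x)
    (hvint : IntegrableOn v Ω volume)
    (φ : ℝ → ℝ) (hφ : IsGauge φ)
    (E : Set (EuclideanSpace ℝ (Fin n))) (hEΩ : E ⊆ Ω)
    (hE0 : volume E = 0)
    (hlim : ∀ x ∈ E, 1 < Filter.limsup
        (fun r : ℝ => (∫ y in ball x r, v y) / φ (2 * r))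
        (nhdsWithin 0 (Set.Ioi 0))) :
    hausdorffGauge φ E = 0 := by
  obtain ⟨hφmono, hφpos, -⟩ := hφ
  let μ := (volume.restrict Ω).withDensity fun y => ENNReal.ofReal (v y)
  have : IsFiniteMeasure μ := isFiniteMeasure_withDensity_ofReal hvint.2
  have hμE : μ E = 0 :=
    (withDensity_absolutelyContinuous _ _).trans (Measure.absolutelyContinuous_of_le
      Measure.restrict_le_self) hE0
  refine hausdorffGauge_eq_zero_of_frequently_le_measure μ hφmono hμE fun x hx => ?_
  obtain ⟨R, hR, hRΩ⟩ := Metric.isOpen_iff.1 hΩ x (hEΩ hx)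
  have hφ2 : ∀ᶠ r in 𝓝[>] (0 : ℝ), 0 < φ (2 * r) :=
    eventually_mem_nhdsWithin.mono fun r hr => hφpos _ (mul_pos two_pos hr)
  refine (frequently_lt_of_one_lt_limsup_div
    (Eventually.of_forall fun r => integral_nonneg hv) hφ2 (hlim x hx)).mp ?_
  filter_upwards [Ioo_mem_nhdsGT hR] with r hr hlt
  calc ENNReal.ofReal (φ (2 * r))
      ≤ ENNReal.ofReal (∫ y in ball x r, v y) := ENNReal.ofReal_le_ofReal hlt.le
    _ ≤ μ (ball x r) :=
        ofReal_setIntegral_le_withDensity hv hvint ((ball_subset_ball hr.2.le).trans hRΩ)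
    _ ≤ μ (closedBall x r) := measure_mono ball_subset_closedBall

theorem stmt_5 (n : ℕ) (hn : 2 ≤ n)
    (Ω : Set (EuclideanSpace ℝ (Fin n))) (hΩ : IsOpen Ω)
    (v : EuclideanSpace ℝ (Fin n) → ℝ) (hv : ∀ x, 0 ≤ v x)
    (hvint : IntegrableOn v Ω volume)
    (φ : ℝ → ℝ) (hφ : IsGauge φ)
    (E : Set (EuclideanSpace ℝ (Fin n))) (hEΩ : E ⊆ Ω)
    (hE0 : volume E = 0)
    (hlim : ∀ x ∈ E, 1 < Filter.limsup
        (fun r : ℝ => (∫ y in ball x r, v y) / φ (2 * r))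
        (nhdsWithin 0 (Set.Ioi 0))) :
    hausdorffGauge φ E = 0 :=
  stmt_5_general n Ω hΩ v hv hvint φ hφ E hEΩ hE0 hlim
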